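/- Let G be a finite cubic simple graph and let A be a MAI set of G. Then B = V(G) \ A is an AI set of G, i.e., the subgraph induced by B has maximum degree at most 1. -/

import Mathlib

/-- A set of vertices is independent if its vertices are pairwise nonadjacent. -/
def IsIndep {V : Type*} (G : SimpleGraph V) (s : Set V) : Prop :=
  s.Pairwise fun u v => ¬ G.Adj u v

/-- The independence number of a graph: the largest size of an independent set. -/
noncomputable def indepNum {V : Type*} (G : SimpleGraph V) : ℕ :=
  sSup {n | ∃ s : Set V, IsIndep G s ∧ s.ncard = n}

/-- A graph is cubic (3-regular) if every vertex has exactly three neighbors. -/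
def IsCubic {V : Type*} (G : SimpleGraph V) : Prop :=
  ∀ v : V, (G.neighborSet v).ncard = 3

/-- `A` is an AI set (almost independent set) if the subgraph induced by `A` has maximum
degree at most 1, i.e. every vertex of `A` has at most one neighbor inside `A`. -/
def IsAI {V : Type*} (G : SimpleGraph V) (A : Set V) : Prop :=
  ∀ a ∈ A, ({b | b ∈ A ∧ G.Adj a b}).ncard ≤ 1

/-- `A` is a MAI set (maximum almost independent set) if `A` is an AI set containing an
independent set of maximum size `α(G)`, and `A` is largest among such sets. -/
def IsMAI {V : Type*} (G : SimpleGraph V) (A : Set V) : Prop :=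
  IsAI G A ∧ (∃ s ⊆ A, IsIndep G s ∧ s.ncard = indepNum G) ∧
    ∀ A' : Set V, IsAI G A' → (∃ s ⊆ A', IsIndep G s ∧ s.ncard = indepNum G) →
      A'.ncard ≤ A.ncard

/-!
Suppose a vertex `b ∉ A` had two neighbours outside `A`. Being cubic, `b` then has at most one
neighbour in `A`. Let `s ⊆ A` be a maximum independent set. By maximality `b` has a neighbour
`a ∈ s`, which is its only neighbour in `A`. If `a` has a neighbour `c` in `A`, then `c` has no
other neighbour in `A`, so exchanging `a` for `b` and `c` gives an independent set larger than
`s`. Otherwise `A ∪ {b}` is still an AI set containing `s`, contradicting the maximality of `A`.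
-/

namespace Set

lemma ncard_insert_insert_diff_singleton {α : Type*} {s : Set α} {a b c : α} (hs : s.Finite)
    (ha : a ∈ s) (hb : b ∉ s) (hc : c ∉ s) (hcb : c ≠ b) :
    (insert c (insert b (s \ {a}))).ncard = s.ncard + 1 := by
  have hb' : b ∉ s \ {a} := fun h => hb h.1
  have hc' : c ∉ insert b (s \ {a}) := by
    rintro (h | h)
    exacts [hcb h, hc h.1]
  rw [ncard_insert_of_notMem hc' (hs.sdiff.insert b), ncard_insert_of_notMem hb' hs.sdiff,
    ncard_sdiff_singleton_of_mem ha]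
  have := (ncard_pos hs).mpr ⟨a, ha⟩
  omega

end Set

section

variable {V : Type*} {G : SimpleGraph V}

lemma IsIndep.insert_of_forall_not_adj {s : Set V} {b : V} (hs : IsIndep G s)
    (hb : ∀ u ∈ s, ¬ G.Adj b u) : IsIndep G (insert b s) :=
  hs.insert fun u hu _ => ⟨hb u hu, fun h => hb u hu h.symm⟩

lemma IsIndep.exchange {s : Set V} {a b c : V} (hs : IsIndep G s)
    (hb : ∀ u ∈ s, G.Adj b u → u = a) (hc : ∀ u ∈ s, G.Adj c u → u = a) (hbc : ¬ G.Adj b c) :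
    IsIndep G (insert c (insert b (s \ {a}))) := by
  have hdiff : IsIndep G (s \ {a}) := hs.mono Set.sdiff_subset
  refine (hdiff.insert_of_forall_not_adj fun u hu hbu => hu.2 (hb u hu.1 hbu))
    |>.insert_of_forall_not_adj ?_
  rintro u (rfl | hu) hcu
  exacts [hbc hcu.symm, hu.2 (hc u hu.1 hcu)]

lemma IsIndep.ncard_le_indepNum [Finite V] {s : Set V} (hs : IsIndep G s) :
    s.ncard ≤ indepNum G :=
  le_csSup ⟨Nat.card V, by rintro n ⟨t, -, rfl⟩; exact t.ncard_le_card⟩ ⟨s, hs, rfl⟩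

lemma IsIndep.exists_adj_of_ncard_eq_indepNum [Finite V] {s : Set V} {b : V} (hs : IsIndep G s)
    (hcard : s.ncard = indepNum G) (hb : b ∉ s) : ∃ a ∈ s, G.Adj b a := by
  by_contra! h
  have := (hs.insert_of_forall_not_adj h).ncard_le_indepNum
  rw [Set.ncard_insert_of_notMem hb] at this
  omega

lemma ncard_adj_mem_le_one_iff [Finite V] {A : Set V} {v : V} :
    {z | z ∈ A ∧ G.Adj v z}.ncard ≤ 1 ↔
      ∀ u ∈ A, ∀ w ∈ A, G.Adj v u → G.Adj v w → u = w := by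
  rw [Set.ncard_le_one_iff]
  exact ⟨fun h u hu w hw hvu hvw => h ⟨hu, hvu⟩ ⟨hw, hvw⟩,
    fun h _ _ hu hw => h _ hu.1 _ hw.1 hu.2 hw.2⟩

lemma IsAI.eq_of_adj [Finite V] {A : Set V} (hA : IsAI G A) {v u w : V} (hv : v ∈ A)
    (hu : u ∈ A) (hw : w ∈ A) (hvu : G.Adj v u) (hvw : G.Adj v w) : u = w :=
  ncard_adj_mem_le_one_iff.mp (hA v hv) u hu w hw hvu hvw

lemma ncard_adj_mem_add_ncard_adj_mem_compl [Finite V] (A : Set V) (v : V) :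
    {z | z ∈ A ∧ G.Adj v z}.ncard + {z | z ∈ Aᶜ ∧ G.Adj v z}.ncard =
      (G.neighborSet v).ncard := by
  rw [← Set.ncard_inter_add_ncard_sdiff_eq_ncard (G.neighborSet v) A]
  congr 2 <;> ext <;> simp [and_comm]

lemma IsAI.insert_of_forall_adj_eq [Finite V] {A : Set V} {a b : V} (hA : IsAI G A)
    (hb : ∀ u ∈ A, G.Adj b u → u = a) (ha : ∀ u ∈ A, ¬ G.Adj a u) : IsAI G (insert b A) := by
  intro v hv
  rw [ncard_adj_mem_le_one_iff]
  have hb' : ∀ u ∈ insert b A, G.Adj b u → u = a := by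
    rintro u (rfl | hu) hbu
    exacts [(G.ne_of_adj hbu rfl).elim, hb u hu hbu]
  rcases hv with rfl | hv
  · exact fun u hu w hw hvu hvw => (hb' u hu hvu).trans (hb' w hw hvw).symm
  by_cases hva : v = a
  · subst hva
    have hvb : ∀ u ∈ insert b A, G.Adj v u → u = b := fun u hu hvu =>
      hu.resolve_right fun hu => ha u hu hvu
    exact fun u hu w hw hvu hvw => (hvb u hu hvu).trans (hvb w hw hvw).symm
  · have hA' : ∀ u ∈ insert b A, G.Adj v u → u ∈ A := by
      rintro u (rfl | hu) hvu
      exacts [(hva (hb v hv hvu.symm)).elim, hu]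
    exact fun u hu w hw hvu hvw => hA.eq_of_adj hv (hA' u hu hvu) (hA' w hw hvw) hvu hvw

end

theorem compl_of_MAI_is_AI {V : Type*} [Fintype V] (G : SimpleGraph V)
    (hcubic : IsCubic G) (A : Set V) (hA : IsMAI G A) :
    IsAI G Aᶜ := by
  obtain ⟨hAI, ⟨s, hsA, hs, hs_card⟩, hmax⟩ := hA
  intro b hb
  by_contra! hdeg
  have hbA : ∀ u ∈ A, ∀ w ∈ A, G.Adj b u → G.Adj b w → u = w := by
    rw [← ncard_adj_mem_le_one_iff]
    have := ncard_adj_mem_add_ncard_adj_mem_compl (G := G) A b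
    have := hcubic b
    omega
  have hbs : b ∉ s := fun h => hb (hsA h)
  obtain ⟨a, has, hba⟩ := hs.exists_adj_of_ncard_eq_indepNum hs_card hbs
  have haA := hsA has
  have hb_only_a : ∀ u ∈ A, G.Adj b u → u = a := fun u hu hbu => hbA u hu a haA hbu hba
  by_cases ha : ∃ c ∈ A, G.Adj a c
  · obtain ⟨c, hcA, hac⟩ := ha
    have hc_only_a : ∀ u ∈ A, G.Adj c u → u = a := fun u hu hcu =>
      hAI.eq_of_adj hcA hu haA hcu hac.symm
    have hbc : ¬ G.Adj b c := fun hbc => G.ne_of_adj hac (hb_only_a c hcA hbc).symm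
    have hcs : c ∉ s := fun hcs => hs has hcs (G.ne_of_adj hac) hac
    have := (hs.exchange (fun u hu => hb_only_a u (hsA hu)) (fun u hu => hc_only_a u (hsA hu))
      hbc).ncard_le_indepNum
    rw [Set.ncard_insert_insert_diff_singleton s.toFinite has hbs hcs
      (fun hcb => hb (hcb ▸ hcA))] at this
    omega
  · push Not at ha
    have := hmax _ (hAI.insert_of_forall_adj_eq hb_only_a ha)
      ⟨s, hsA.trans (Set.subset_insert b A), hs, hs_card⟩
    rw [Set.ncard_insert_of_notMem hb] at this
    omega
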